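/- arXiv:2105.03210 — 7 statements merged into one kernel-verified Lean document; each statement's English description precedes it below -/
import Mathlib

section
/- For A ∈ L^∞_+(Ω) and B, C ∈ L^∞(Ω;ℂ^{d×d}) with A + C ∈ L^∞_+(Ω), the operators P defined by ⟨P_A(B)y, v⟩_A = −⟨y,v⟩_B satisfy the resolvent-type identity P_{A+C}(B) − P_A(B) = P_A(C) P_{A+C}(B) as operators on H¹_⋄(Ω). -/
/- Statement 4: the resolvent-type identity
`P_{A+C}(B) − P_A(B) = P_A(C) ∘ P_{A+C}(B)` on `H¹_⋄(Ω)`, for operators defined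
via `⟨P_A(B)y, v⟩_A = −⟨y,v⟩_B`.  `H` stands for `H¹_⋄(Ω)` and `a` for the family
of sesquilinear forms `⟨·,·⟩_C = ∫_Ω (C∇·)·conj(∇·)`; its additivity in the
coefficient and the coercivity of `⟨·,·⟩_A` (which makes the defining relations
determine the operators uniquely) are recorded as hypotheses. -/

open MeasureTheory Matrix

noncomputable section

theorem stmt4 {d : ℕ}
    {H : Type*} [NormedAddCommGroup H] [InnerProductSpace ℂ H] [CompleteSpace H]
    (a : (EuclideanSpace ℝ (Fin d) → Matrix (Fin d) (Fin d) ℂ) → H → H → ℂ)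
    (A B C : EuclideanSpace ℝ (Fin d) → Matrix (Fin d) (Fin d) ℂ) (cA : ℝ)
    -- linearity in the first argument
    (hsub1 : ∀ D (w w' v : H), a D (w - w') v = a D w v - a D w' v)
    -- additivity in the coefficient: `⟨·,·⟩_{A+C} = ⟨·,·⟩_A + ⟨·,·⟩_C`
    (hcoefadd : ∀ w v, a (A + C) w v = a A w v + a C w v)
    -- coercivity of `A` (so `A ∈ L^∞_+(Ω)`)
    (hcA : 0 < cA)
    (hAcoer : ∀ v : H, cA * ‖v‖ ^ 2 ≤ (a A v v).re)
    -- the three operators, defined by their variational identities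
    (PAB PApCB PAC : H →L[ℂ] H)
    (hPAB : ∀ y v, a A (PAB y) v = -a B y v)
    (hPApCB : ∀ y v, a (A + C) (PApCB y) v = -a B y v)
    (hPAC : ∀ y v, a A (PAC y) v = -a C y v) :
    PApCB - PAB = PAC.comp PApCB := by
  ext y
  have key : ∀ v : H, a A (PApCB y - PAB y - PAC (PApCB y)) v = 0 := by
    intro v
    have h1 : a A (PApCB y) v = -a B y v - a C (PApCB y) v := by
      have := hcoefadd (PApCB y) v
      have h2 := hPApCB y v
      linear_combination h2 - this
    rw [hsub1, hsub1, h1, hPAB y v, hPAC (PApCB y) v]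
    ring
  have hw : PApCB y - PAB y - PAC (PApCB y) = 0 := by
    have h0 := hAcoer (PApCB y - PAB y - PAC (PApCB y))
    rw [key] at h0
    simp only [Complex.zero_re] at h0
    have h2 : ‖PApCB y - PAB y - PAC (PApCB y)‖ ^ 2 ≤ 0 :=
      le_of_not_gt fun h => absurd h0 (not_le.mpr (mul_pos hcA h))
    have h3 : ‖PApCB y - PAB y - PAC (PApCB y)‖ = 0 := by
      nlinarith [norm_nonneg (PApCB y - PAB y - PAC (PApCB y))]
    exact norm_eq_zero.mp h3
  have := sub_eq_zero.mp hw
  simpa [sub_eq_iff_eq_add'] using this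

end
end

section
/- The map A ↦ P_A(B), defined on L^∞_+(Ω) with values in L(H¹_⋄(Ω)), is Fréchet differentiable with derivative D_A P_A(B;C) = P_A(C) P_A(B); more precisely, ‖P_{A+C}(B) − P_A(B) − P_A(C)P_A(B)‖ ≤ ‖B‖‖C‖² / (c_A² (c_A − ‖C‖)) for ‖C‖ < c_A. -/
/- Statement 5: the map `A ↦ P_A(B)` is Fréchet differentiable with derivative
`D_A P_A(B;C) = P_A(C)P_A(B)`; more precisely, the quantitative estimate
`‖P_{A+C}(B) − P_A(B) − P_A(C)P_A(B)‖ ≤ ‖B‖‖C‖²/(c_A²(c_A − ‖C‖))` holds for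
`‖C‖ < c_A`.  `H` stands for `H¹_⋄(Ω)`, `a` for the family of sesquilinear forms
`⟨·,·⟩_D = ∫_Ω (D∇·)·conj(∇·)`, and `coeffNorm μ` for the `L^∞` norm
`‖·‖ = ess sup ‖·(x)‖₂` of a matrix-valued coefficient. -/

open MeasureTheory Matrix

noncomputable section

def specNorm {d : ℕ} (M : Matrix (Fin d) (Fin d) ℂ) : ℝ :=
  ‖(Matrix.toEuclideanCLM (𝕜 := ℂ) M :
      EuclideanSpace ℂ (Fin d) →L[ℂ] EuclideanSpace ℂ (Fin d))‖

def coeffNorm {d : ℕ} (μ : Measure (EuclideanSpace ℝ (Fin d)))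
    (B : EuclideanSpace ℝ (Fin d) → Matrix (Fin d) (Fin d) ℂ) : ℝ :=
  essSup (fun x => specNorm (B x)) μ

/- `P_{A+C}(B) − P_A(B)` solves the `A`-problem with right-hand side `C P_{A+C}(B)`, and
subtracting `P_A(C) P_A(B)` leaves the `A`-problem with right-hand side
`C (P_{A+C}(B) − P_A(B))`. Each time coercivity of `A` gains a factor `‖C‖/c_A`, and
`‖P_{A+C}(B)‖ ≤ ‖B‖/(c_A − ‖C‖)` finishes the estimate. -/

lemma essSup_nonneg {α : Type*} [MeasurableSpace α] {μ : Measure α} {f : α → ℝ}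
    (hf : ∀ x, 0 ≤ f x) : 0 ≤ essSup f μ := by
  rcases eq_zero_or_neZero μ with rfl | hμ
  · simp [essSup, Filter.limsup_eq]
  · rw [essSup, Filter.limsup_eq]
    refine Real.sInf_nonneg fun c hc => ?_
    obtain ⟨x, hx⟩ := Filter.Eventually.exists (f := ae μ) hc
    exact (hf x).trans hx

lemma coeffNorm_nonneg {d : ℕ} (μ : Measure (EuclideanSpace ℝ (Fin d)))
    (B : EuclideanSpace ℝ (Fin d) → Matrix (Fin d) (Fin d) ℂ) : 0 ≤ coeffNorm μ B :=
  essSup_nonneg fun _ => norm_nonneg _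

lemma ContinuousLinearMap.opNorm_le_mul_opNorm_of_forall_norm_apply_le {𝕜 E F G : Type*}
    [NontriviallyNormedField 𝕜] [SeminormedAddCommGroup E] [SeminormedAddCommGroup F]
    [SeminormedAddCommGroup G] [NormedSpace 𝕜 E] [NormedSpace 𝕜 F] [NormedSpace 𝕜 G]
    {T : E →L[𝕜] F} {S : E →L[𝕜] G} {k : ℝ} (hk : 0 ≤ k) (h : ∀ y, ‖T y‖ ≤ k * ‖S y‖) :
    ‖T‖ ≤ k * ‖S‖ :=
  T.opNorm_le_bound (by positivity) fun y =>
    (h y).trans <| by rw [mul_assoc]; exact mul_le_mul_of_nonneg_left (S.le_opNorm y) hk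

lemma norm_le_of_coercive_of_eq_neg {E : Type*} [SeminormedAddCommGroup E]
    {α β : E → E → ℂ} {cα cβ : ℝ} (hcα : 0 < cα) (hcβ : 0 ≤ cβ)
    (hcoer : ∀ v, cα * ‖v‖ ^ 2 ≤ (α v v).re) (hβ : ∀ w v, ‖β w v‖ ≤ cβ * ‖w‖ * ‖v‖)
    {w z : E} (h : α w w = -β z w) :
    ‖w‖ ≤ cβ / cα * ‖z‖ := by
  have key : cα * ‖w‖ ^ 2 ≤ cβ * ‖z‖ * ‖w‖ :=
    calc cα * ‖w‖ ^ 2 ≤ (α w w).re := hcoer w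
      _ ≤ ‖α w w‖ := Complex.re_le_norm _
      _ = ‖β z w‖ := by rw [h, norm_neg]
      _ ≤ cβ * ‖z‖ * ‖w‖ := hβ z w
  rw [div_mul_eq_mul_div, le_div_iff₀ hcα]
  rcases (norm_nonneg w).eq_or_lt with hw | hw
  · rw [← hw, zero_mul]; exact mul_nonneg hcβ (norm_nonneg z)
  · nlinarith

theorem stmt5_general {d : ℕ} (μ : Measure (EuclideanSpace ℝ (Fin d)))
    {H : Type*} [NormedAddCommGroup H] [InnerProductSpace ℂ H] [CompleteSpace H]
    (a : (EuclideanSpace ℝ (Fin d) → Matrix (Fin d) (Fin d) ℂ) → H → H → ℂ)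
    (A B C : EuclideanSpace ℝ (Fin d) → Matrix (Fin d) (Fin d) ℂ) (cA : ℝ)
    (hsub1 : ∀ D (w w' v : H), a D (w - w') v = a D w v - a D w' v)
    (hcoefadd : ∀ w v, a (A + C) w v = a A w v + a C w v)
    -- continuity of the forms with the `L^∞` constants
    (hCbdd : ∀ w v, ‖a C w v‖ ≤ coeffNorm μ C * ‖w‖ * ‖v‖)
    -- coercivity of `A` and (hence) of `A + C`
    (hcA : 0 < cA)
    (hAcoer : ∀ v : H, cA * ‖v‖ ^ 2 ≤ (a A v v).re)
    -- the operators and their standard norm bounds `‖P_A(B)‖ ≤ ‖B‖/c_A` etc.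
    (PAB PApCB PAC : H →L[ℂ] H)
    (hPAB : ∀ y v, a A (PAB y) v = -a B y v)
    (hPApCB : ∀ y v, a (A + C) (PApCB y) v = -a B y v)
    (hPAC : ∀ y v, a A (PAC y) v = -a C y v)
    (hPApCBle : ‖PApCB‖ ≤ coeffNorm μ B / (cA - coeffNorm μ C)) :
    ‖PApCB - PAB - PAC.comp PAB‖ ≤
      coeffNorm μ B * coeffNorm μ C ^ 2 / (cA ^ 2 * (cA - coeffNorm μ C)) := by
  set c := coeffNorm μ C
  have hk : 0 ≤ c / cA := div_nonneg (coeffNorm_nonneg μ C) hcA.le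
  have hstab : ∀ {w z : H}, a A w w = -a C z w → ‖w‖ ≤ c / cA * ‖z‖ :=
    norm_le_of_coercive_of_eq_neg hcA (coeffNorm_nonneg μ C) hAcoer hCbdd
  have hfirst : ∀ y v, a A (PApCB y - PAB y) v = -a C (PApCB y) v := fun y v => by
    have hsum := hPApCB y v
    rw [hcoefadd] at hsum
    rw [hsub1, hPAB]
    linear_combination hsum
  have hsecond : ∀ y v,
      a A (PApCB y - PAB y - PAC (PAB y)) v = -a C (PApCB y - PAB y) v := fun y v => by
    rw [hsub1, hfirst, hPAC, hsub1]
    ring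
  have hfirst_le : ‖PApCB - PAB‖ ≤ c / cA * ‖PApCB‖ :=
    ContinuousLinearMap.opNorm_le_mul_opNorm_of_forall_norm_apply_le hk
      fun y => hstab (hfirst y _)
  have hsecond_le : ‖PApCB - PAB - PAC.comp PAB‖ ≤ c / cA * ‖PApCB - PAB‖ :=
    ContinuousLinearMap.opNorm_le_mul_opNorm_of_forall_norm_apply_le hk
      fun y => hstab (hsecond y _)
  calc ‖PApCB - PAB - PAC.comp PAB‖ ≤ c / cA * (c / cA * ‖PApCB‖) :=
        hsecond_le.trans (mul_le_mul_of_nonneg_left hfirst_le hk)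
    _ ≤ c / cA * (c / cA * (coeffNorm μ B / (cA - c))) :=
        mul_le_mul_of_nonneg_left (mul_le_mul_of_nonneg_left hPApCBle hk) hk
    _ = coeffNorm μ B * c ^ 2 / (cA ^ 2 * (cA - c)) := by
        simp only [div_eq_mul_inv, mul_inv]; ring

theorem stmt5 {d : ℕ} (μ : Measure (EuclideanSpace ℝ (Fin d)))
    {H : Type*} [NormedAddCommGroup H] [InnerProductSpace ℂ H] [CompleteSpace H]
    (a : (EuclideanSpace ℝ (Fin d) → Matrix (Fin d) (Fin d) ℂ) → H → H → ℂ)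
    (A B C : EuclideanSpace ℝ (Fin d) → Matrix (Fin d) (Fin d) ℂ) (cA : ℝ)
    (hsub1 : ∀ D (w w' v : H), a D (w - w') v = a D w v - a D w' v)
    (hcoefadd : ∀ w v, a (A + C) w v = a A w v + a C w v)
    -- continuity of the forms with the `L^∞` constants
    (hBbdd : ∀ w v, ‖a B w v‖ ≤ coeffNorm μ B * ‖w‖ * ‖v‖)
    (hCbdd : ∀ w v, ‖a C w v‖ ≤ coeffNorm μ C * ‖w‖ * ‖v‖)
    -- coercivity of `A` and (hence) of `A + C`
    (hcA : 0 < cA)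
    (hAcoer : ∀ v : H, cA * ‖v‖ ^ 2 ≤ (a A v v).re)
    (hApCcoer : ∀ v : H, (cA - coeffNorm μ C) * ‖v‖ ^ 2 ≤ (a (A + C) v v).re)
    -- `‖C‖ < c_A`
    (hC : coeffNorm μ C < cA)
    -- the operators and their standard norm bounds `‖P_A(B)‖ ≤ ‖B‖/c_A` etc.
    (PAB PApCB PAC : H →L[ℂ] H)
    (hPAB : ∀ y v, a A (PAB y) v = -a B y v)
    (hPApCB : ∀ y v, a (A + C) (PApCB y) v = -a B y v)
    (hPAC : ∀ y v, a A (PAC y) v = -a C y v)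
    (hPABle : ‖PAB‖ ≤ coeffNorm μ B / cA)
    (hPACle : ‖PAC‖ ≤ coeffNorm μ C / cA)
    (hPApCBle : ‖PApCB‖ ≤ coeffNorm μ B / (cA - coeffNorm μ C)) :
    ‖PApCB - PAB - PAC.comp PAB‖ ≤
      coeffNorm μ B * coeffNorm μ C ^ 2 / (cA ^ 2 * (cA - coeffNorm μ C)) :=
  stmt5_general μ a A B C cA hsub1 hcoefadd hCbdd hcA hAcoer PAB PApCB PAC hPAB hPApCB hPAC hPApCBle

end
end

section
/- For A ∈ L^∞_+(Ω) and B ∈ L^∞(Ω;ℂ^{d×d}) with A + B ∈ L^∞_+(Ω), the solution operators N(A), N(A+B) ∈ L(L²_⋄(Γ), H¹_⋄(Ω)) of the continuum model satisfy (id − P_A(B)) N(A+B) = N(A). Consequently, if ‖B‖ < c_A, then N(A+B) = Σ_{k=0}^∞ P_A(B)^k N(A), with the Neumann series converging in operator norm. -/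
/- `H` stands for `H¹_⋄(Ω)`, `K` for `L²_⋄(Γ)`, `T : H →L K` for the trace, `a` for
the family of forms `⟨·,·⟩_C`, and `coeffNorm μ B` for `‖B‖ = ess sup ‖B(x)‖₂`;
`N(A)f` is the unique solution of `⟨N(A)f, v⟩_A = ⟨f, Tv⟩_{L²(Γ)} = ⟪Tv, f⟫`.

Since `⟨·,·⟩_{A+B} = ⟨·,·⟩_A + ⟨·,·⟩_B`, the function `(id − P_A(B)) N(A+B) f` solves the
variational problem that defines `N(A) f`, whose solution is unique by coercivity of `A`.
As `‖P_A(B)‖ ≤ ‖B‖/c_A < 1`, the geometric series `Σ P_A(B)^k` inverts `id − P_A(B)`. -/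

open MeasureTheory Matrix

noncomputable section

theorem eq_of_coercive_of_forall_eq {H : Type*} [NormedAddCommGroup H] {b : H → H → ℂ}
    (hsub : ∀ w w' v, b (w - w') v = b w v - b w' v) {c : ℝ} (hc : 0 < c)
    (hcoer : ∀ v, c * ‖v‖ ^ 2 ≤ (b v v).re) {w w' : H} (h : ∀ v, b w v = b w' v) :
    w = w' := by
  have hzero : b (w - w') (w - w') = 0 := by rw [hsub, h, sub_self]
  have hle : c * ‖w - w'‖ ^ 2 ≤ 0 := by simpa only [hzero, Complex.zero_re] using hcoer (w - w')
  have hsq : ‖w - w'‖ ^ 2 ≤ 0 := nonpos_of_mul_nonpos_right hle hc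
  exact sub_eq_zero.mp (norm_eq_zero.mp (pow_eq_zero_iff two_ne_zero |>.mp
    (le_antisymm hsq (sq_nonneg _))))

theorem ContinuousLinearMap.hasSum_pow_comp_of_id_sub_comp_eq {𝕜 E F : Type*}
    [NontriviallyNormedField 𝕜] [NormedAddCommGroup E] [NormedSpace 𝕜 E]
    [NormedAddCommGroup F] [NormedSpace 𝕜 F] [CompleteSpace F]
    {P : F →L[𝕜] F} (hP : ‖P‖ < 1) {M N : E →L[𝕜] F}
    (h : (ContinuousLinearMap.id 𝕜 F - P).comp M = N) :
    HasSum (fun k : ℕ => (P ^ k).comp N) M := by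
  have hgeom : HasSum (fun k : ℕ => P ^ k) (∑' k : ℕ, P ^ k) :=
    (summable_geometric_of_norm_lt_one hP).hasSum
  have hM : (∑' k : ℕ, P ^ k).comp N = M := by
    rw [← h]
    change ((∑' k : ℕ, P ^ k) * (1 - P)).comp M = M
    rw [geom_series_mul_neg P hP]
    exact M.id_comp
  exact hM ▸ hgeom.mapL ((compL 𝕜 E F F).flip N)

theorem stmt6_general {d : ℕ} (μ : Measure (EuclideanSpace ℝ (Fin d)))
    {H K : Type*} [NormedAddCommGroup H] [InnerProductSpace ℂ H] [CompleteSpace H]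
    [NormedAddCommGroup K] [InnerProductSpace ℂ K]
    (T : H →L[ℂ] K)
    (a : (EuclideanSpace ℝ (Fin d) → Matrix (Fin d) (Fin d) ℂ) → H → H → ℂ)
    (A B : EuclideanSpace ℝ (Fin d) → Matrix (Fin d) (Fin d) ℂ) (cA : ℝ)
    (hsub1 : ∀ D (w w' v : H), a D (w - w') v = a D w v - a D w' v)
    (hcoefadd : ∀ w v, a (A + B) w v = a A w v + a B w v)
    (hcA : 0 < cA)
    (hAcoer : ∀ v : H, cA * ‖v‖ ^ 2 ≤ (a A v v).re)
    -- `A + B ∈ L^∞_+(Ω)` is guaranteed by the assumption `‖B‖ < c_A`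
    (hB : coeffNorm μ B < cA)
    -- the solution operators and `P_A(B)`
    (NA NApB : K →L[ℂ] H) (PAB : H →L[ℂ] H)
    (hNA : ∀ f v, a A (NA f) v = (inner ℂ (T v) f : ℂ))
    (hNApB : ∀ f v, a (A + B) (NApB f) v = (inner ℂ (T v) f : ℂ))
    (hPAB : ∀ y v, a A (PAB y) v = -a B y v)
    (hPABle : ‖PAB‖ ≤ coeffNorm μ B / cA) :
    (ContinuousLinearMap.id ℂ H - PAB).comp NApB = NA ∧
    ‖PAB‖ < 1 ∧
    Summable (fun k : ℕ => (PAB ^ k).comp NA) ∧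
    NApB = ∑' k : ℕ, (PAB ^ k).comp NA := by
  have hperturb : (ContinuousLinearMap.id ℂ H - PAB).comp NApB = NA := by
    ext f
    refine eq_of_coercive_of_forall_eq (hsub1 A) hcA hAcoer fun v => ?_
    calc a A (NApB f - PAB (NApB f)) v = a A (NApB f) v + a B (NApB f) v := by
          rw [hsub1, hPAB, sub_neg_eq_add]
      _ = inner ℂ (T v) f := by rw [← hcoefadd, hNApB]
      _ = a A (NA f) v := (hNA f v).symm
  have hlt : ‖PAB‖ < 1 := hPABle.trans_lt ((div_lt_one hcA).mpr hB)
  have hseries := ContinuousLinearMap.hasSum_pow_comp_of_id_sub_comp_eq hlt hperturb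
  exact ⟨hperturb, hlt, hseries.summable, hseries.tsum_eq.symm⟩

theorem stmt6 {d : ℕ} (μ : Measure (EuclideanSpace ℝ (Fin d)))
    {H K : Type*} [NormedAddCommGroup H] [InnerProductSpace ℂ H] [CompleteSpace H]
    [NormedAddCommGroup K] [InnerProductSpace ℂ K] [CompleteSpace K]
    (T : H →L[ℂ] K)
    (a : (EuclideanSpace ℝ (Fin d) → Matrix (Fin d) (Fin d) ℂ) → H → H → ℂ)
    (A B : EuclideanSpace ℝ (Fin d) → Matrix (Fin d) (Fin d) ℂ) (cA : ℝ)
    (hsub1 : ∀ D (w w' v : H), a D (w - w') v = a D w v - a D w' v)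
    (hcoefadd : ∀ w v, a (A + B) w v = a A w v + a B w v)
    (hBbdd : ∀ w v, ‖a B w v‖ ≤ coeffNorm μ B * ‖w‖ * ‖v‖)
    (hcA : 0 < cA)
    (hAcoer : ∀ v : H, cA * ‖v‖ ^ 2 ≤ (a A v v).re)
    (hApBcoer : ∀ v : H, (cA - coeffNorm μ B) * ‖v‖ ^ 2 ≤ (a (A + B) v v).re)
    -- `A + B ∈ L^∞_+(Ω)` is guaranteed by the assumption `‖B‖ < c_A`
    (hB : coeffNorm μ B < cA) (hB0 : 0 ≤ coeffNorm μ B)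
    -- the solution operators and `P_A(B)`
    (NA NApB : K →L[ℂ] H) (PAB : H →L[ℂ] H)
    (hNA : ∀ f v, a A (NA f) v = (inner ℂ (T v) f : ℂ))
    (hNApB : ∀ f v, a (A + B) (NApB f) v = (inner ℂ (T v) f : ℂ))
    (hPAB : ∀ y v, a A (PAB y) v = -a B y v)
    (hPABle : ‖PAB‖ ≤ coeffNorm μ B / cA) :
    (ContinuousLinearMap.id ℂ H - PAB).comp NApB = NA ∧
    ‖PAB‖ < 1 ∧
    Summable (fun k : ℕ => (PAB ^ k).comp NA) ∧
    NApB = ∑' k : ℕ, (PAB ^ k).comp NA :=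
  stmt6_general μ T a A B cA hsub1 hcoefadd hcA hAcoer hB NA NApB PAB hNA hNApB hPAB hPABle

end
end

section
/- If A ∈ L^∞_+(Ω) is Hermitian (A(x)* = A(x) a.e.), then the Fréchet derivative of the Neumann-to-Dirichlet map satisfies the bilinear formula ⟨DΛ(A;B)g, f⟩_{L²(Γ)} = −∫_Ω (B ∇u^A_g) · conj(∇u^A_f) dx for all f, g ∈ L²_⋄(Γ), where u^A_f, u^A_g are the solutions of the continuum model with Neumann data f and g. -/
/-!
For `‖C - A‖ < cA` the form `a C = a A + a (C - A)` stays coercive, and comparing the weak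
formulations of `N C` and `N A` gives `(1 - P (C - A)) ∘ N C = N A`. Coercivity also bounds
`‖P (C - A)‖ ≤ ‖C - A‖ / cA < 1`, so `N C = (1 - P (C - A))⁻¹ ∘ N A` near `A`, and the derivative
of ring inversion at `1` yields `DΛ(A; B) = T ∘ P B ∘ N A`. Testing against `f` through the weak
formulation of `N A f` and the Hermitian symmetry of `a A` turns `⟪f, T (P B (N A g))⟫` into
`a A (P B (N A g)) (N A f) = -a B (N A g) (N A f)`.
-/

open ContinuousLinearMap Filter Topology

theorem hasFDerivAt_ringInverse_one_sub {𝕜 W R : Type*} [NontriviallyNormedField 𝕜]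
    [NormedAddCommGroup W] [NormedSpace 𝕜 W] [NormedRing R] [HasSummableGeomSeries R]
    [NormedAlgebra 𝕜 R] (P : W →L[𝕜] R) (A : W) :
    HasFDerivAt (fun C => Ring.inverse (1 - P (C - A))) P A := by
  have hinv : HasFDerivAt Ring.inverse (-mulLeftRight 𝕜 R 1 1) (1 - P (A - A)) := by
    simpa using hasFDerivAt_ringInverse (𝕜 := 𝕜) (1 : Rˣ)
  have haffine : HasFDerivAt (fun C => 1 - P (C - A)) (-P) A :=
    (P.hasFDerivAt.comp A ((hasFDerivAt_id A).sub_const A)).const_sub 1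
  refine (hinv.comp A haffine).congr_fderiv ?_
  ext B
  simp

def IsCoerciveWith {H : Type*} [Norm H] (b : H → H → ℂ) (c : ℝ) : Prop :=
  ∀ v, c * ‖v‖ ^ 2 ≤ (b v v).re

namespace IsCoerciveWith

variable {W H : Type*} [NormedAddCommGroup W] [NormedAddCommGroup H] {c : ℝ}

theorem eq_of_forall_eq {b : H → H → ℂ} (hb : IsCoerciveWith b c) (hc : 0 < c)
    (hsub : ∀ w w' v, b (w - w') v = b w v - b w' v) {w₁ w₂ : H}
    (h : ∀ v, b w₁ v = b w₂ v) : w₁ = w₂ := by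
  have hzero : b (w₁ - w₂) (w₁ - w₂) = 0 := by rw [hsub, h, sub_self]
  have hle := hb (w₁ - w₂)
  rw [hzero, Complex.zero_re] at hle
  have hsq : ‖w₁ - w₂‖ ^ 2 = 0 := le_antisymm (nonpos_of_mul_nonpos_right hle hc) (sq_nonneg _)
  simpa [sub_eq_zero] using hsq

theorem of_norm_sub {a : W → H → H → ℂ} {A : W} (hA : IsCoerciveWith (a A) c)
    (hadd : ∀ B C w v, a (B + C) w v = a B w v + a C w v)
    (hbdd : ∀ B w v, ‖a B w v‖ ≤ ‖B‖ * ‖w‖ * ‖v‖) (C : W) :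
    IsCoerciveWith (a C) (c - ‖C - A‖) := by
  intro v
  have hsplit : a C v v = a A v v + a (C - A) v v := by
    rw [← hadd, add_sub_cancel]
  have hpert : -(‖C - A‖ * ‖v‖ ^ 2) ≤ (a (C - A) v v).re := by
    have hre := (abs_le.mp (Complex.abs_re_le_norm (a (C - A) v v))).1
    nlinarith [hbdd (C - A) v v]
  rw [hsplit, Complex.add_re]
  nlinarith [hA v]

theorem opNorm_le [NormedSpace ℂ W] [NormedSpace ℂ H] {a : W → H → H → ℂ} {A : W}
    (hA : IsCoerciveWith (a A) c) (hc : 0 < c)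
    (hbdd : ∀ B w v, ‖a B w v‖ ≤ ‖B‖ * ‖w‖ * ‖v‖) {P : W →L[ℂ] H →L[ℂ] H}
    (hP : ∀ B y v, a A (P B y) v = -a B y v) (B : W) : ‖P B‖ ≤ c⁻¹ * ‖B‖ := by
  refine opNorm_le_bound _ (by positivity) fun y => ?_
  have hquad : c * ‖P B y‖ ^ 2 ≤ ‖B‖ * ‖y‖ * ‖P B y‖ :=
    calc c * ‖P B y‖ ^ 2 ≤ (a A (P B y) (P B y)).re := hA _
      _ = (-a B y (P B y)).re := by rw [hP]
      _ ≤ ‖a B y (P B y)‖ := by simpa using Complex.re_le_norm (-a B y (P B y))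
      _ ≤ ‖B‖ * ‖y‖ * ‖P B y‖ := hbdd _ _ _
  rw [mul_assoc, le_inv_mul_iff₀ hc]
  rcases (norm_nonneg (P B y)).eq_or_lt with h0 | hpos
  · rw [← h0, mul_zero]; positivity
  · exact le_of_mul_le_mul_right (by nlinarith) hpos

end IsCoerciveWith

section WeakSolution

variable {W H K : Type*} [NormedAddCommGroup W] [NormedSpace ℂ W]
  [NormedAddCommGroup H] [NormedSpace ℂ H] [NormedAddCommGroup K] [InnerProductSpace ℂ K]
  {T : H →L[ℂ] K} {a : W → H → H → ℂ} {A : W} {c : ℝ} {P : W →L[ℂ] H →L[ℂ] H}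

theorem one_sub_comp_solution_eq (hA : IsCoerciveWith (a A) c) (hc : 0 < c)
    (hsub : ∀ w w' v, a A (w - w') v = a A w v - a A w' v)
    (hadd : ∀ B C w v, a (B + C) w v = a B w v + a C w v)
    (hP : ∀ B y v, a A (P B y) v = -a B y v) {C : W} {uA uC : K →L[ℂ] H}
    (huA : ∀ f v, a A (uA f) v = inner ℂ (T v) f)
    (huC : ∀ f v, a C (uC f) v = inner ℂ (T v) f) :
    (1 - P (C - A)).comp uC = uA := by
  ext f
  refine hA.eq_of_forall_eq hc hsub fun v => ?_
  calc a A ((1 - P (C - A)) (uC f)) v = a A (uC f) v + a (C - A) (uC f) v := by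
        rw [sub_apply, one_apply_eq_self, hsub, hP, sub_neg_eq_add]
    _ = a C (uC f) v := by rw [← hadd, add_sub_cancel]
    _ = a A (uA f) v := by rw [huC, huA]

theorem eventually_solution_eq_ringInverse_comp [CompleteSpace H]
    (hA : IsCoerciveWith (a A) c) (hc : 0 < c)
    (hsub : ∀ w w' v, a A (w - w') v = a A w v - a A w' v)
    (hadd : ∀ B C w v, a (B + C) w v = a B w v + a C w v)
    (hbdd : ∀ B w v, ‖a B w v‖ ≤ ‖B‖ * ‖w‖ * ‖v‖)
    (hP : ∀ B y v, a A (P B y) v = -a B y v) {N : W → K →L[ℂ] H}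
    (hN : ∀ C, (∃ c > 0, IsCoerciveWith (a C) c) → ∀ f v, a C (N C f) v = inner ℂ (T v) f) :
    ∀ᶠ C in 𝓝 A, N C = (Ring.inverse (1 - P (C - A))).comp (N A) := by
  filter_upwards [Metric.ball_mem_nhds A hc] with C hC
  rw [Metric.mem_ball, dist_eq_norm] at hC
  have hsmall : ‖P (C - A)‖ < 1 :=
    calc ‖P (C - A)‖ ≤ c⁻¹ * ‖C - A‖ := hA.opNorm_le hc hbdd hP _
      _ < c⁻¹ * c := by gcongr
      _ = 1 := inv_mul_cancel₀ hc.ne'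
  have hNC := hN C ⟨c - ‖C - A‖, sub_pos.mpr hC, hA.of_norm_sub hadd hbdd C⟩
  have hNA := hN A ⟨c, hc, hA⟩
  rw [← one_sub_comp_solution_eq hA hc hsub hadd hP hNA hNC, ← comp_assoc, ← mul_def,
    Ring.inverse_mul_cancel (1 - P (C - A)) (Units.oneSub _ hsmall).isUnit, one_def, id_comp]

end WeakSolution

theorem stmt9_general
    {W : Type*} [NormedAddCommGroup W] [NormedSpace ℂ W]
    {H K : Type*} [NormedAddCommGroup H] [InnerProductSpace ℂ H] [CompleteSpace H]
    [NormedAddCommGroup K] [InnerProductSpace ℂ K]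
    (T : H →L[ℂ] K)
    (a : W → H → H → ℂ)
    (A B : W) (cA : ℝ)
    (hsub1 : ∀ (D : W) (w w' v : H), a D (w - w') v = a D w v - a D w' v)
    (hcoefadd : ∀ (B' C : W) (w v : H), a (B' + C) w v = a B' w v + a C w v)
    (habdd : ∀ (B' : W) (w v : H), ‖a B' w v‖ ≤ ‖B'‖ * ‖w‖ * ‖v‖)
    (hcA : 0 < cA)
    (hAcoer : ∀ v : H, cA * ‖v‖ ^ 2 ≤ (a A v v).re)
    -- `A` is Hermitian: its sesquilinear form is conjugate-symmetric
    (hherm : ∀ w v : H, a A w v = starRingEnd ℂ (a A v w))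
    (P : W →L[ℂ] (H →L[ℂ] H))
    (hP : ∀ (B' : W) (y v : H), a A (P B' y) v = -a B' y v)
    (N : W → (K →L[ℂ] H))
    (hN : ∀ C : W, (∃ c > 0, ∀ v : H, c * ‖v‖ ^ 2 ≤ (a C v v).re) →
      ∀ (f : K) (v : H), a C (N C f) v = (inner ℂ (T v) f : ℂ)) :
    ∀ f g : K,
      (inner ℂ f (fderiv ℂ (fun C => T.comp (N C)) A B g) : ℂ) =
        -a B (N A g) (N A f) := by
  intro f g
  have hA : IsCoerciveWith (a A) cA := hAcoer
  set Φ : (H →L[ℂ] H) →L[ℂ] K →L[ℂ] K := (compL ℂ K H K T).comp ((compL ℂ K H H).flip (N A))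
  have hderiv : HasFDerivAt (fun C => T.comp (N C)) (Φ.comp P) A := by
    refine (Φ.hasFDerivAt.comp A (hasFDerivAt_ringInverse_one_sub P A)).congr_of_eventuallyEq ?_
    filter_upwards [eventually_solution_eq_ringInverse_comp hA hcA (hsub1 A) hcoefadd habdd hP hN]
      with C hC
    rw [hC]
    rfl
  rw [hderiv.fderiv]
  calc inner ℂ f (T (P B (N A g)))
      = starRingEnd ℂ (inner ℂ (T (P B (N A g))) f) := (inner_conj_symm _ _).symm
    _ = starRingEnd ℂ (a A (N A f) (P B (N A g))) := by rw [hN A ⟨cA, hcA, hA⟩]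
    _ = a A (P B (N A g)) (N A f) := by rw [hherm (N A f), Complex.conj_conj]
    _ = -a B (N A g) (N A f) := hP B (N A g) (N A f)

theorem stmt9
    {W : Type*} [NormedAddCommGroup W] [NormedSpace ℂ W]
    {H K : Type*} [NormedAddCommGroup H] [InnerProductSpace ℂ H] [CompleteSpace H]
    [NormedAddCommGroup K] [InnerProductSpace ℂ K] [CompleteSpace K]
    (T : H →L[ℂ] K)
    (a : W → H → H → ℂ)
    (A B : W) (cA : ℝ)
    (hsub1 : ∀ (D : W) (w w' v : H), a D (w - w') v = a D w v - a D w' v)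
    (hcoefadd : ∀ (B' C : W) (w v : H), a (B' + C) w v = a B' w v + a C w v)
    (hcoefsmul : ∀ (c : ℂ) (B' : W) (w v : H), a (c • B') w v = c * a B' w v)
    (habdd : ∀ (B' : W) (w v : H), ‖a B' w v‖ ≤ ‖B'‖ * ‖w‖ * ‖v‖)
    (hcA : 0 < cA)
    (hAcoer : ∀ v : H, cA * ‖v‖ ^ 2 ≤ (a A v v).re)
    -- `A` is Hermitian: its sesquilinear form is conjugate-symmetric
    (hherm : ∀ w v : H, a A w v = starRingEnd ℂ (a A v w))
    (P : W →L[ℂ] (H →L[ℂ] H))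
    (hP : ∀ (B' : W) (y v : H), a A (P B' y) v = -a B' y v)
    (N : W → (K →L[ℂ] H))
    (hN : ∀ C : W, (∃ c > 0, ∀ v : H, c * ‖v‖ ^ 2 ≤ (a C v v).re) →
      ∀ (f : K) (v : H), a C (N C f) v = (inner ℂ (T v) f : ℂ)) :
    ∀ f g : K,
      (inner ℂ f (fderiv ℂ (fun C => T.comp (N C)) A B g) : ℂ) =
        -a B (N A g) (N A f) :=
  stmt9_general T a A B cA hsub1 hcoefadd habdd hcA hAcoer hherm P hP N hN
end

section
/- On the quotient Hilbert space H = (H¹(Ω) ⊕ ℂ^m)/ℂ equipped with ‖(v,V)‖_H² = ∫_Ω|∇v|² + ‖T̃v − V‖²_{L²(𝓔)}, the SCEM sesquilinear form a_A[(w,W),(v,V)] = ⟨w,v⟩_A + ∫_{∂Ω} ζ (T̃w−W) conj(T̃v−V) dS satisfies the coercivity bound |a_A[(v,V),(v,V)]| ≥ Re a_A[(v,V),(v,V)] ≥ min{c_A, c_ζ} ‖(v,V)‖_H². -/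
/-! Pointwise, `Re ⟨G, A G⟩ ≥ c_A |G|²` and `Re (ζ |w|²) = Re ζ · |w|²`, which is nonnegative
everywhere and at least `c_ζ |w|²` on `𝓔`; integrating, the real part of the form dominates
`c_A ∫ |∇v|² + c_ζ ‖T̃v − V‖²_{L²(𝓔)}`. Here `G` stands for `∇v` and `w` for `T̃v − V`. -/

open MeasureTheory

section

variable {X 𝕜 : Type*} [MeasurableSpace X] {μ : Measure X} [RCLike 𝕜]

lemma const_mul_integral_le_re_integral {f : X → 𝕜} {g : X → ℝ} {c : ℝ}
    (hg : Integrable g μ) (hf : Integrable f μ) (h : ∀ᵐ x ∂μ, c * g x ≤ RCLike.re (f x)) :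
    c * ∫ x, g x ∂μ ≤ RCLike.re (∫ x, f x ∂μ) := by
  rw [← integral_const_mul, ← integral_re hf]
  exact integral_mono_ae (hg.const_mul c) hf.re h

lemma const_mul_setIntegral_sq_le_re_integral {ζ w : X → 𝕜} {S : Set X} {c : ℝ}
    (hw : MemLp w 2 (μ.restrict S)) (hint : Integrable (fun x => ζ x * (‖w x‖ : 𝕜) ^ 2) μ)
    (hζ : ∀ᵐ x ∂μ, 0 ≤ RCLike.re (ζ x)) (hζS : ∀ᵐ x ∂(μ.restrict S), c ≤ RCLike.re (ζ x)) :
    c * ∫ x in S, ‖w x‖ ^ 2 ∂μ ≤ RCLike.re (∫ x, ζ x * (‖w x‖ : 𝕜) ^ 2 ∂μ) := by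
  have re_eq : ∀ x, RCLike.re (ζ x * (‖w x‖ : 𝕜) ^ 2) = RCLike.re (ζ x) * ‖w x‖ ^ 2 := fun x => by
    rw [← RCLike.ofReal_pow, RCLike.re_mul_ofReal]
  calc c * ∫ x in S, ‖w x‖ ^ 2 ∂μ
      ≤ RCLike.re (∫ x in S, ζ x * (‖w x‖ : 𝕜) ^ 2 ∂μ) := by
        refine const_mul_integral_le_re_integral hw.norm.integrable_sq hint.restrict ?_
        filter_upwards [hζS] with x hx
        rw [re_eq]
        exact mul_le_mul_of_nonneg_right hx (sq_nonneg _)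
    _ = ∫ x in S, RCLike.re (ζ x * (‖w x‖ : 𝕜) ^ 2) ∂μ := (integral_re hint.restrict).symm
    _ ≤ ∫ x, RCLike.re (ζ x * (‖w x‖ : 𝕜) ^ 2) ∂μ := by
        refine setIntegral_le_integral hint.re ?_
        filter_upwards [hζ] with x hx
        rw [Pi.zero_apply, re_eq]
        exact mul_nonneg hx (sq_nonneg _)
    _ = RCLike.re (∫ x, ζ x * (‖w x‖ : 𝕜) ^ 2 ∂μ) := integral_re hint

end

lemma min_mul_add_le_mul_add_mul {a b x y : ℝ} (hx : 0 ≤ x) (hy : 0 ≤ y) :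
    min a b * (x + y) ≤ a * x + b * y := by
  rw [mul_add]
  exact add_le_add (mul_le_mul_of_nonneg_right (min_le_left a b) hx)
    (mul_le_mul_of_nonneg_right (min_le_right a b) hy)

theorem stmt12_general {d : ℕ} {Y : Type*} [MeasurableSpace Y]
    (μ : Measure (EuclideanSpace ℝ (Fin d))) (ν : Measure Y)
    (A : EuclideanSpace ℝ (Fin d) → Matrix (Fin d) (Fin d) ℂ) (cA : ℝ)
    (ζ : Y → ℂ) (𝓔 : Set Y) (cζ : ℝ)
    -- `A ∈ L^∞_+(Ω)` with constant `c_A`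
    (hAcoer : ∀ᵐ x ∂μ, ∀ ξ : EuclideanSpace ℂ (Fin d),
      cA * ‖ξ‖ ^ 2 ≤ (inner ℂ ξ (Matrix.toEuclideanCLM (𝕜 := ℂ) (A x) ξ) : ℂ).re)
    -- the contact admittance
    (hζ0 : ∀ᵐ y ∂ν, 0 ≤ (ζ y).re)
    (hζ𝓔 : ∀ᵐ y ∂(ν.restrict 𝓔), cζ ≤ (ζ y).re)
    -- data of a generic element `(v,V)`: gradient and boundary discrepancy
    (G : EuclideanSpace ℝ (Fin d) → EuclideanSpace ℂ (Fin d)) (w : Y → ℂ)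
    (hG : MemLp G 2 μ) (hw : MemLp w 2 ν)
    (hint1 : Integrable
      (fun x => (inner ℂ (G x) (Matrix.toEuclideanCLM (𝕜 := ℂ) (A x) (G x)) : ℂ)) μ)
    (hint2 : Integrable (fun y => ζ y * (‖w y‖ : ℂ) ^ 2) ν) :
    min cA cζ * ((∫ x, ‖G x‖ ^ 2 ∂μ) + ∫ y in 𝓔, ‖w y‖ ^ 2 ∂ν) ≤
      ((∫ x, (inner ℂ (G x) (Matrix.toEuclideanCLM (𝕜 := ℂ) (A x) (G x)) : ℂ) ∂μ) +
        ∫ y, ζ y * (‖w y‖ : ℂ) ^ 2 ∂ν).re ∧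
    ((∫ x, (inner ℂ (G x) (Matrix.toEuclideanCLM (𝕜 := ℂ) (A x) (G x)) : ℂ) ∂μ) +
        ∫ y, ζ y * (‖w y‖ : ℂ) ^ 2 ∂ν).re ≤
      ‖(∫ x, (inner ℂ (G x) (Matrix.toEuclideanCLM (𝕜 := ℂ) (A x) (G x)) : ℂ) ∂μ) +
        ∫ y, ζ y * (‖w y‖ : ℂ) ^ 2 ∂ν‖ := by
  refine ⟨?_, Complex.re_le_norm _⟩
  have interior := const_mul_integral_le_re_integral hG.norm.integrable_sq hint1
    (hAcoer.mono fun x hx => hx (G x))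
  have boundary := const_mul_setIntegral_sq_le_re_integral (hw.restrict 𝓔) hint2 hζ0 hζ𝓔
  rw [Complex.add_re]
  calc min cA cζ * ((∫ x, ‖G x‖ ^ 2 ∂μ) + ∫ y in 𝓔, ‖w y‖ ^ 2 ∂ν)
      ≤ cA * (∫ x, ‖G x‖ ^ 2 ∂μ) + cζ * ∫ y in 𝓔, ‖w y‖ ^ 2 ∂ν :=
        min_mul_add_le_mul_add_mul (integral_nonneg fun _ => sq_nonneg _)
          (integral_nonneg fun _ => sq_nonneg _)
    _ ≤ _ := add_le_add interior boundary

theorem stmt12 {d : ℕ} {Y : Type*} [MeasurableSpace Y]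
    (μ : Measure (EuclideanSpace ℝ (Fin d))) (ν : Measure Y)
    (A : EuclideanSpace ℝ (Fin d) → Matrix (Fin d) (Fin d) ℂ) (cA : ℝ)
    (ζ : Y → ℂ) (E 𝓔 : Set Y) (cζ : ℝ)
    -- `A ∈ L^∞_+(Ω)` with constant `c_A`
    (hcA : 0 < cA)
    (hAcoer : ∀ᵐ x ∂μ, ∀ ξ : EuclideanSpace ℂ (Fin d),
      cA * ‖ξ‖ ^ 2 ≤ (inner ℂ ξ (Matrix.toEuclideanCLM (𝕜 := ℂ) (A x) ξ) : ℂ).re)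
    -- the contact admittance
    (hcζ : 0 < cζ) (h𝓔E : 𝓔 ⊆ E) (h𝓔 : MeasurableSet 𝓔)
    (hζ0 : ∀ᵐ y ∂ν, 0 ≤ (ζ y).re)
    (hζsupp : ∀ᵐ y ∂ν, y ∉ E → ζ y = 0)
    (hζ𝓔 : ∀ᵐ y ∂(ν.restrict 𝓔), cζ ≤ (ζ y).re)
    -- data of a generic element `(v,V)`: gradient and boundary discrepancy
    (G : EuclideanSpace ℝ (Fin d) → EuclideanSpace ℂ (Fin d)) (w : Y → ℂ)
    (hG : MemLp G 2 μ) (hw : MemLp w 2 ν)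
    (hint1 : Integrable
      (fun x => (inner ℂ (G x) (Matrix.toEuclideanCLM (𝕜 := ℂ) (A x) (G x)) : ℂ)) μ)
    (hint2 : Integrable (fun y => ζ y * (‖w y‖ : ℂ) ^ 2) ν) :
    min cA cζ * ((∫ x, ‖G x‖ ^ 2 ∂μ) + ∫ y in 𝓔, ‖w y‖ ^ 2 ∂ν) ≤
      ((∫ x, (inner ℂ (G x) (Matrix.toEuclideanCLM (𝕜 := ℂ) (A x) (G x)) : ℂ) ∂μ) +
        ∫ y, ζ y * (‖w y‖ : ℂ) ^ 2 ∂ν).re ∧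
    ((∫ x, (inner ℂ (G x) (Matrix.toEuclideanCLM (𝕜 := ℂ) (A x) (G x)) : ℂ) ∂μ) +
        ∫ y, ζ y * (‖w y‖ : ℂ) ^ 2 ∂ν).re ≤
      ‖(∫ x, (inner ℂ (G x) (Matrix.toEuclideanCLM (𝕜 := ℂ) (A x) (G x)) : ℂ) ∂μ) +
        ∫ y, ζ y * (‖w y‖ : ℂ) ^ 2 ∂ν‖ :=
  stmt12_general μ ν A cA ζ 𝓔 cζ hAcoer hζ0 hζ𝓔 G w hG hw hint1 hint2
end

section
/- Let 𝓔(B) = Q(𝒫Λ(A+B)𝒫 − 𝒫Λ(A)𝒫) be the projected relative forward map of the continuum model, defined on 𝒲 intersected with the open ball of radius c_A. Under the assumption that 𝓕 = 𝒫DΛ(A;·)𝒫 restricted to 𝒲 is injective with closed complemented range 𝒴 = 𝓕(𝒲), there exist open neighbourhoods of the origin U_𝒲 ⊂ 𝒲 and U_𝒴 ⊂ 𝒴 such that 𝓔 restricted to U_𝒲 is a bijection onto U_𝒴 with analytic inverse. -/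
/-!
Since `Q` is the identity on `𝒴 = range 𝓕` and `𝓕` is injective, `Q ∘ 𝓕 : 𝒲 → 𝒴` is a continuous
linear bijection between Banach spaces, hence an isomorphism by the open mapping theorem. It is
the derivative at `0` of the analytic map `𝓔`, so the inverse function theorem yields a local
homeomorphism whose inverse is analytic at `0`; shrinking it to the open set where the inverse is
analytic gives the neighbourhoods `U_𝒲` and `U_𝒴`.
-/

open Topology

section AnalyticInverse

variable {𝕜 : Type*} [NontriviallyNormedField 𝕜]
  {E F : Type*} [NormedAddCommGroup E] [NormedSpace 𝕜 E] [CompleteSpace E]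
  [NormedAddCommGroup F] [NormedSpace 𝕜 F]

theorem AnalyticAt.exists_openPartialHomeomorph_analyticOnNhd_symm {f : E → F}
    {f' : E ≃L[𝕜] F} {a : E} (hf : AnalyticAt 𝕜 f a) (hf' : HasFDerivAt f (f' : E →L[𝕜] F) a)
    {s : Set E} (hs : s ∈ 𝓝 a) :
    ∃ φ : OpenPartialHomeomorph E F, ⇑φ = f ∧ a ∈ φ.source ∧ φ.source ⊆ s ∧
      AnalyticOnNhd 𝕜 φ.symm φ.target := by
  have hstrict : HasStrictFDerivAt f (f' : E →L[𝕜] F) a := hf'.fderiv ▸ hf.hasStrictFDerivAt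
  set φ₀ := hstrict.toOpenPartialHomeomorph f
  have ha : a ∈ φ₀.source := hstrict.mem_toOpenPartialHomeomorph_source
  have hsymm : AnalyticAt 𝕜 φ₀.symm (φ₀ a) := φ₀.analyticAt_symm' ha hf hf'.fderiv
  set V := interior s ∩ (φ₀.source ∩ φ₀ ⁻¹' {y | AnalyticAt 𝕜 φ₀.symm y})
  have hV : IsOpen V :=
    isOpen_interior.inter (φ₀.isOpen_inter_preimage (isOpen_analyticAt 𝕜 _))
  set φ := φ₀.restrOpen V hV
  have hsource : φ.source = φ₀.source ∩ V := φ₀.restrOpen_source V hV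
  refine ⟨φ, rfl, hsource ▸ ⟨ha, mem_interior_iff_mem_nhds.2 hs, ha, hsymm⟩,
    hsource ▸ fun x hx => interior_subset hx.2.1, fun y hy => ?_⟩
  have hy' : AnalyticAt 𝕜 φ₀.symm (φ₀ (φ₀.symm y)) := (hsource ▸ φ.map_target hy).2.2.2
  have hinv : φ₀ (φ₀.symm y) = y := φ.right_inv hy
  rwa [hinv] at hy'

end AnalyticInverse

theorem ContinuousLinearMap.bijective_comp_of_range_eq {𝕜 W Z : Type*} [Semiring 𝕜]
    [TopologicalSpace W] [AddCommMonoid W] [Module 𝕜 W]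
    [TopologicalSpace Z] [AddCommMonoid Z] [Module 𝕜 Z]
    {F : W →L[𝕜] Z} (hF : Function.Injective F) {Y : Submodule 𝕜 Z}
    (hY : (Y : Set Z) = Set.range F) (Q : Z →L[𝕜] Y) (hQ : ∀ z : Y, Q z = z) :
    Function.Bijective (Q.comp F) := by
  have hQF : ∀ w, (Q (F w) : Z) = F w := fun w => by
    have hw : F w ∈ Y := by rw [← SetLike.mem_coe, hY]; exact ⟨w, rfl⟩
    exact congrArg Subtype.val (hQ ⟨F w, hw⟩)
  refine ⟨fun w w' h => hF ?_, fun y => ?_⟩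
  · rw [← hQF w, ← hQF w']; exact congrArg Subtype.val h
  · obtain ⟨w, hw⟩ : (y : Z) ∈ Set.range F := hY ▸ y.2
    exact ⟨w, Subtype.ext ((hQF w).trans hw)⟩

theorem stmt15
    {W Z : Type*} [NormedAddCommGroup W] [NormedSpace ℂ W] [CompleteSpace W]
    [NormedAddCommGroup Z] [NormedSpace ℂ Z] [CompleteSpace Z]
    (cA : ℝ) (hcA : 0 < cA)
    (Lam : W → Z)
    (hLam : AnalyticOnNhd ℂ Lam (Metric.ball (0 : W) cA))
    -- Assumption: `𝓕 = D(𝒫Λ(A+·)𝒫)(0)` is injective on `𝒲` …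
    (hinj : Function.Injective (fderiv ℂ Lam 0))
    -- … and `𝒴 = 𝓕(𝒲)` is a closed (complemented) subspace
    (Y : Submodule ℂ Z)
    (hYrange : (Y : Set Z) = Set.range (fderiv ℂ Lam 0))
    (hYclosed : IsClosed (Y : Set Z))
    -- the projection `Q` onto `𝒴`
    (Q' : Z →L[ℂ] Y) (hQ' : ∀ z : Y, Q' (z : Z) = z) :
    ∃ (UW : Set W) (UY : Set Y),
      IsOpen UW ∧ IsOpen UY ∧ (0 : W) ∈ UW ∧ (0 : Y) ∈ UY ∧
      UW ⊆ Metric.ball (0 : W) cA ∧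
      Set.InjOn (fun B => Q' (Lam B - Lam 0)) UW ∧
      (fun B => Q' (Lam B - Lam 0)) '' UW = UY ∧
      ∃ G : Y → W, AnalyticOnNhd ℂ G UY ∧
        (∀ B ∈ UW, G (Q' (Lam B - Lam 0)) = B) ∧
        (∀ y ∈ UY, Q' (Lam (G y) - Lam 0) = y) := by
  have : CompleteSpace Y := hYclosed.completeSpace_coe
  have hT := ContinuousLinearMap.bijective_comp_of_range_eq hinj hYrange Q' hQ'
  let e := ContinuousLinearEquiv.ofBijective (Q'.comp (fderiv ℂ Lam 0))
    (LinearMap.ker_eq_bot.2 hT.1) (LinearMap.range_eq_top.2 hT.2)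
  have hLam0 : AnalyticAt ℂ Lam 0 := hLam 0 (Metric.mem_ball_self hcA)
  have hE : AnalyticAt ℂ (fun B => Q' (Lam B - Lam 0)) 0 :=
    (Q'.analyticAt _).comp (hLam0.sub analyticAt_const)
  have hE' : HasFDerivAt (fun B => Q' (Lam B - Lam 0)) (e : W →L[ℂ] Y) 0 := by
    rw [ContinuousLinearEquiv.coe_ofBijective]
    exact Q'.hasFDerivAt.comp 0 (hLam0.differentiableAt.hasFDerivAt.sub_const _)
  obtain ⟨φ, hφ, h0, hsub, hsymm⟩ :=
    hE.exists_openPartialHomeomorph_analyticOnNhd_symm hE' (Metric.ball_mem_nhds 0 hcA)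
  have hφB : ∀ B, φ B = Q' (Lam B - Lam 0) := congrFun hφ
  have hφ0 : φ 0 = 0 := by simp [hφB]
  simp only [← hφB]
  exact ⟨φ.source, φ.target, φ.open_source, φ.open_target, h0, hφ0 ▸ φ.map_source h0, hsub,
    φ.injOn, φ.image_source_eq_target, φ.symm, hsymm, fun B hB => φ.left_inv hB,
    fun y hy => φ.right_inv hy⟩
end

section
/- Under Assumption 1 (B ∈ 𝒲, 𝓕 = 𝒫DΛ(A;·)𝒫 injective on 𝒲 with 𝒴 = 𝓕(𝒲) closed and complemented), the second- and third-order reversion of the Taylor series of the projected relative forward map yields B = F₁ + F₂ + F₃ + O(‖B‖⁴), where F₁ = 𝓕⁻¹Q(𝒫Λ(A+B)𝒫 − 𝒫Λ(A)𝒫), F₂ = −M P(F₁)² N, and F₃ = −M P(F₁)³ N + M P(F₁) P(F₂') N + M P(F₂') P(F₁) N with F₂' = M P(F₁)² N, and each F_j satisfies ‖F_j‖ = O(‖B‖^j). -/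
/-!
Write `x = P B` and `Φ X = Mop (X ∘ N)`, so that `Φ (P B) = B`. Summing the Neumann series
gives `F₁ = B + Φ (x²) + Φ (x³) + O(‖B‖⁴)`, hence `u := P F₁ = x + O(‖B‖²)` and, with
`g := P (Φ (u²))`, also `u - x - g = O(‖B‖³)`. Up to the `O(‖B‖⁴)` tail of the series, the
remainder `B - (F₁ + F₂ + F₃)` is `Φ (u (u - x - g) + (u - x - g) x - g (u - x)) + Φ (u³ - x³)`,
a sum of products whose factors have orders adding up to at least four.
-/

open Filter Asymptotics Topology

section NormPow

variable {W E F : Type*} [NormedAddCommGroup W] [Norm F] [NormedRing E]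

theorem isBigO_norm_pow_of_le {i j : ℕ} (h : i ≤ j) :
    (fun B : W => ‖B‖ ^ j) =O[𝓝 0] fun B => ‖B‖ ^ i := by
  refine IsBigO.of_bound 1 ?_
  filter_upwards [Metric.closedBall_mem_nhds (0 : W) one_pos] with B hB
  rw [mem_closedBall_zero_iff] at hB
  simpa only [norm_pow, norm_norm, one_mul] using pow_le_pow_of_le_one (norm_nonneg B) hB h

theorem Asymptotics.IsBigO.norm_pow_of_le {f : W → F} {i j : ℕ}
    (hf : f =O[𝓝 0] fun B => ‖B‖ ^ j) (h : i ≤ j) : f =O[𝓝 0] fun B => ‖B‖ ^ i :=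
  hf.trans (isBigO_norm_pow_of_le h)

theorem Asymptotics.IsBigO.mul_norm_pow {f g : W → E} {i j k : ℕ}
    (hf : f =O[𝓝 0] fun B => ‖B‖ ^ i) (hg : g =O[𝓝 0] fun B => ‖B‖ ^ j) (hk : k ≤ i + j) :
    (fun B => f B * g B) =O[𝓝 0] fun B => ‖B‖ ^ k :=
  ((hf.mul hg).congr_right fun _ => (pow_add _ _ _).symm).norm_pow_of_le hk

theorem ContinuousLinearMap.pow_isBigO_norm_pow {𝕜 : Type*} [NontriviallyNormedField 𝕜]
    [NormedSpace 𝕜 W] [NormedSpace 𝕜 E] (P : W →L[𝕜] E) (l : Filter W) (n : ℕ) :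
    (fun B => P B ^ n) =O[l] fun B => ‖B‖ ^ n :=
  (P.isBigO_id l).norm_right.pow n

theorem exists_pos_forall_norm_le_of_eventually {p : W → Prop} (h : ∀ᶠ B in 𝓝 0, p B) :
    ∃ δ > 0, ∀ B, ‖B‖ ≤ δ → p B := by
  obtain ⟨ε, hε, hp⟩ := Metric.eventually_nhds_iff.1 h
  exact ⟨ε / 2, half_pos hε, fun B hB => hp (by rw [dist_zero_right]; linarith)⟩

end NormPow

section NeumannSeries

variable {E : Type*} [NormedRing E] [HasSummableGeomSeries E]

theorem tsum_pow_succ_sub_isBigO :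
    (fun x : E => ∑' k, x ^ (k + 1) - (x + x ^ 2 + x ^ 3)) =O[𝓝 0] fun x => ‖x‖ ^ 4 := by
  refine IsBigO.of_bound 2 ?_
  filter_upwards [Metric.ball_mem_nhds (0 : E) one_half_pos] with x hx
  rw [mem_ball_zero_iff] at hx
  have hx1 : ‖x‖ < 1 := hx.trans one_half_lt_one
  have hsum : Summable fun k => x ^ (k + 1) :=
    (summable_nat_add_iff 1).mpr (summable_geometric_of_norm_lt_one hx1)
  have htail : HasSum (fun k => ‖x‖ ^ 4 * ‖x‖ ^ k) (‖x‖ ^ 4 * (1 - ‖x‖)⁻¹) :=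
    (hasSum_geometric_of_lt_one (norm_nonneg x) hx1).mul_left _
  rw [← hsum.sum_add_tsum_nat_add 3]
  simp only [Finset.sum_range_succ, Finset.sum_range_zero, zero_add, pow_one,
    add_sub_cancel_left, norm_pow, Real.norm_eq_abs, abs_norm]
  calc ‖∑' k, x ^ (k + 3 + 1)‖ ≤ ‖x‖ ^ 4 * (1 - ‖x‖)⁻¹ :=
        tsum_of_norm_bounded htail fun k => by
          rw [← pow_add, add_comm 4]
          exact norm_pow_le' x (by omega)
    _ ≤ 2 * ‖x‖ ^ 4 := by
        rw [mul_comm]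
        gcongr
        rw [inv_le_comm₀ (by linarith) two_pos]
        linarith

variable {𝕜 W V : Type*} [NontriviallyNormedField 𝕜] [NormedSpace 𝕜 E]
  [NormedAddCommGroup W] [NormedSpace 𝕜 W] [NormedAddCommGroup V] [NormedSpace 𝕜 V]

theorem tsum_map_pow_succ_sub_isBigO {P : W →L[𝕜] E} {Ψ : E →L[𝕜] V} {M : V →L[𝕜] W}
    (hM : ∀ B, M (Ψ (P B)) = B) {F₁ : W → W} (hF₁ : ∀ B, F₁ B = M (∑' k, Ψ (P B ^ (k + 1)))) :
    (fun B => F₁ B - (B + (M.comp Ψ) (P B ^ 2) + (M.comp Ψ) (P B ^ 3)))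
      =O[𝓝 0] fun B => ‖B‖ ^ 4 := by
  have hP : Tendsto P (𝓝 0) (𝓝 0) := P.continuous.tendsto' 0 0 (map_zero P)
  have hseries := ((M.comp Ψ).isBigO_comp _ _).trans
    ((tsum_pow_succ_sub_isBigO.comp_tendsto hP).trans ((P.isBigO_id _).norm_norm.pow 4))
  refine hseries.congr' ?_ EventuallyEq.rfl
  filter_upwards [hP (Metric.ball_mem_nhds 0 one_pos)] with B hB
  rw [Set.mem_preimage, mem_ball_zero_iff] at hB
  have hsum : Summable fun k => P B ^ (k + 1) :=
    (summable_nat_add_iff 1).mpr (summable_geometric_of_norm_lt_one hB)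
  simp only [hF₁, Function.comp_apply, ContinuousLinearMap.comp_apply, map_sub, map_add,
    Ψ.map_tsum hsum, hM]

end NeumannSeries

namespace TaylorReversion

variable {𝕜 W E : Type*} [NontriviallyNormedField 𝕜] [NormedAddCommGroup W] [NormedSpace 𝕜 W]
  [NormedRing E] [NormedSpace 𝕜 E] {P : W →L[𝕜] E} {Φ : E →L[𝕜] W} {F₁ : W → W}
  (hF₁ : (fun B => F₁ B - (B + Φ (P B ^ 2) + Φ (P B ^ 3))) =O[𝓝 0] fun B => ‖B‖ ^ 4)
include hF₁

theorem first_sub_id_isBigO : (fun B => F₁ B - B) =O[𝓝 0] fun B => ‖B‖ ^ 2 := by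
  have h₂ := (Φ.isBigO_comp _ _).trans (P.pow_isBigO_norm_pow (𝓝 0) 2)
  have h₃ := (Φ.isBigO_comp _ _).trans (P.pow_isBigO_norm_pow (𝓝 0) 3)
  refine ((hF₁.norm_pow_of_le (by norm_num)).add
    (h₂.add (h₃.norm_pow_of_le (by norm_num)))).congr_left fun B => ?_
  abel

theorem first_isBigO : F₁ =O[𝓝 0] fun B => ‖B‖ ^ 1 :=
  (((first_sub_id_isBigO hF₁).norm_pow_of_le (by norm_num)).add
    ((isBigO_refl _ _).norm_right.congr_right fun _ => (pow_one _).symm)).congr_left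
    fun _ => sub_add_cancel _ _

theorem map_first_isBigO : (fun B => P (F₁ B)) =O[𝓝 0] fun B => ‖B‖ ^ 1 :=
  (P.isBigO_comp _ _).trans (first_isBigO hF₁)

theorem map_first_sub_map_isBigO : (fun B => P (F₁ B) - P B) =O[𝓝 0] fun B => ‖B‖ ^ 2 :=
  ((P.isBigO_comp _ _).trans (first_sub_id_isBigO hF₁)).congr_left fun _ => map_sub P _ _

theorem map_first_sq_isBigO : (fun B => P (F₁ B) ^ 2) =O[𝓝 0] fun B => ‖B‖ ^ 2 :=
  ((map_first_isBigO hF₁).mul_norm_pow (map_first_isBigO hF₁) le_rfl).congr_left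
    fun _ => (sq _).symm

theorem map_map_sq_isBigO : (fun B => P (Φ (P (F₁ B) ^ 2))) =O[𝓝 0] fun B => ‖B‖ ^ 2 :=
  (P.isBigO_comp _ _).trans <| (Φ.isBigO_comp _ _).trans (map_first_sq_isBigO hF₁)

theorem map_first_sq_sub_sq_isBigO :
    (fun B => P (F₁ B) ^ 2 - P B ^ 2) =O[𝓝 0] fun B => ‖B‖ ^ 3 := by
  have hx := (P.pow_isBigO_norm_pow (𝓝 0) 1).congr_left fun _ => pow_one _
  have hu := map_first_isBigO hF₁
  have hd := map_first_sub_map_isBigO hF₁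
  refine ((hu.mul_norm_pow hd le_rfl).add (hd.mul_norm_pow hx le_rfl)).congr_left fun B => ?_
  noncomm_ring

theorem map_first_sub_map_sub_map_map_sq_isBigO :
    (fun B => P (F₁ B) - P B - P (Φ (P (F₁ B) ^ 2))) =O[𝓝 0] fun B => ‖B‖ ^ 3 := by
  have h₃ := (Φ.isBigO_comp _ _).trans (P.pow_isBigO_norm_pow (𝓝 0) 3)
  have hsq := (Φ.isBigO_comp _ _).trans (map_first_sq_sub_sq_isBigO hF₁)
  refine ((P.isBigO_comp _ _).trans
    (((hF₁.norm_pow_of_le (by norm_num)).add h₃).sub hsq)).congr_left fun B => ?_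
  simp only [map_sub, map_add]
  abel

theorem second_isBigO {F₂ : W → W} (hF₂ : ∀ B, F₂ B = -Φ (P (F₁ B) ^ 2)) :
    F₂ =O[𝓝 0] fun B => ‖B‖ ^ 2 :=
  ((Φ.isBigO_comp _ _).trans (map_first_sq_isBigO hF₁)).neg_left.congr_left
    fun B => (hF₂ B).symm

theorem third_isBigO {F₃ : W → W}
    (hF₃ : ∀ B, F₃ B = -Φ (P (F₁ B) ^ 3) + Φ (P (F₁ B) * P (Φ (P (F₁ B) ^ 2)))
      + Φ (P (Φ (P (F₁ B) ^ 2)) * P (F₁ B))) :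
    F₃ =O[𝓝 0] fun B => ‖B‖ ^ 3 := by
  have hu := map_first_isBigO hF₁
  have hg := map_map_sq_isBigO hF₁
  have hu3 : (fun B => P (F₁ B) ^ 3) =O[𝓝 0] fun B => ‖B‖ ^ 3 :=
    ((map_first_sq_isBigO hF₁).mul_norm_pow hu le_rfl).congr_left fun _ => (pow_succ _ 2).symm
  exact ((((Φ.isBigO_comp _ _).trans hu3).neg_left.add
    ((Φ.isBigO_comp _ _).trans (hu.mul_norm_pow hg le_rfl))).add
    ((Φ.isBigO_comp _ _).trans (hg.mul_norm_pow hu le_rfl))).congr_left fun B => (hF₃ B).symm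

theorem remainder_isBigO {F₂ F₃ : W → W} (hF₂ : ∀ B, F₂ B = -Φ (P (F₁ B) ^ 2))
    (hF₃ : ∀ B, F₃ B = -Φ (P (F₁ B) ^ 3) + Φ (P (F₁ B) * P (Φ (P (F₁ B) ^ 2)))
      + Φ (P (Φ (P (F₁ B) ^ 2)) * P (F₁ B))) :
    (fun B => B - (F₁ B + F₂ B + F₃ B)) =O[𝓝 0] fun B => ‖B‖ ^ 4 := by
  have hx := (P.pow_isBigO_norm_pow (𝓝 0) 1).congr_left fun _ => pow_one _
  have hu := map_first_isBigO hF₁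
  have hd := map_first_sub_map_isBigO hF₁
  have hg := map_map_sq_isBigO hF₁
  have he := map_first_sub_map_sub_map_map_sq_isBigO hF₁
  have hsq : (fun B => P (F₁ B) ^ 2 - P B ^ 2
      - (P (F₁ B) * P (Φ (P (F₁ B) ^ 2)) + P (Φ (P (F₁ B) ^ 2)) * P (F₁ B)))
      =O[𝓝 0] fun B => ‖B‖ ^ 4 := by
    refine (((hu.mul_norm_pow he le_rfl).add (he.mul_norm_pow hx le_rfl)).sub
      (hg.mul_norm_pow hd le_rfl)).congr_left fun B => ?_
    noncomm_ring
  have hcube : (fun B => P (F₁ B) ^ 3 - P B ^ 3) =O[𝓝 0] fun B => ‖B‖ ^ 4 := by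
    refine ((((map_first_sq_isBigO hF₁).mul_norm_pow hd le_rfl).add
      ((hu.mul_norm_pow hd le_rfl).mul_norm_pow hx le_rfl)).add
      ((hd.mul_norm_pow hx le_rfl).mul_norm_pow hx le_rfl)).congr_left fun B => ?_
    noncomm_ring
  refine (((Φ.isBigO_comp _ _).trans (hsq.add hcube)).sub hF₁).congr_left fun B => ?_
  rw [hF₂, hF₃]
  simp only [map_add, map_sub]
  abel

end TaylorReversion

theorem stmt16_general
    {W : Type*} [NormedAddCommGroup W] [NormedSpace ℂ W]
    {H K : Type*} [NormedAddCommGroup H] [InnerProductSpace ℂ H] [CompleteSpace H]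
    [NormedAddCommGroup K] [InnerProductSpace ℂ K]
    (N : K →L[ℂ] H)                          -- `N = N(A)`
    (P : W →L[ℂ] (H →L[ℂ] H))                -- `B ↦ P_A(B)`
    (Mop : (K →L[ℂ] H) →L[ℂ] W)              -- `y ↦ 𝓕⁻¹ Q (𝒫 T y 𝒫)`
    -- Assumption 1: `𝓕⁻¹ ∘ 𝓕 = id` on `𝒲`
    (hM : ∀ B : W, Mop ((P B).comp N) = B)
    -- the reversion terms
    (F₁ F₂ F₃ : W → W)
    (hF₁ : ∀ B : W, F₁ B = Mop (∑' k : ℕ, (P B ^ (k + 1)).comp N))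
    (hF₂ : ∀ B : W, F₂ B = -Mop ((P (F₁ B) ^ 2).comp N))
    (hF₃ : ∀ B : W, F₃ B =
      -Mop ((P (F₁ B) ^ 3).comp N)
      + Mop (((P (F₁ B)).comp (P (Mop ((P (F₁ B) ^ 2).comp N)))).comp N)
      + Mop (((P (Mop ((P (F₁ B) ^ 2).comp N))).comp (P (F₁ B))).comp N)) :
    ∃ δ C : ℝ, 0 < δ ∧ 0 < C ∧ ∀ B : W, ‖B‖ ≤ δ →
      ‖F₁ B‖ ≤ C * ‖B‖ ∧
      ‖F₂ B‖ ≤ C * ‖B‖ ^ 2 ∧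
      ‖F₃ B‖ ≤ C * ‖B‖ ^ 3 ∧
      ‖B - (F₁ B + F₂ B + F₃ B)‖ ≤ C * ‖B‖ ^ 4 := by
  have hexp := tsum_map_pow_succ_sub_isBigO (P := P) (Ψ := .precomp H N) (M := Mop) hM hF₁
  have h₁ := TaylorReversion.first_isBigO hexp
  have h₂ := TaylorReversion.second_isBigO hexp hF₂
  have h₃ := TaylorReversion.third_isBigO hexp hF₃
  have h₄ := TaylorReversion.remainder_isBigO hexp hF₂ hF₃
  obtain ⟨C, hC, hC₁, hC₂, hC₃, hC₄⟩ := ((eventually_gt_atTop 0).and <|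
    (isBigO_iff_eventually.1 h₁).and <| (isBigO_iff_eventually.1 h₂).and <|
    (isBigO_iff_eventually.1 h₃).and (isBigO_iff_eventually.1 h₄)).exists
  obtain ⟨δ, hδ, hB⟩ := exists_pos_forall_norm_le_of_eventually (hC₁.and <| hC₂.and <| hC₃.and hC₄)
  refine ⟨δ, C, hδ, hC, fun B hB' => ?_⟩
  simpa only [norm_pow, norm_norm, pow_one] using hB B hB'

theorem stmt16
    {W : Type*} [NormedAddCommGroup W] [NormedSpace ℂ W] [CompleteSpace W]
    {H K : Type*} [NormedAddCommGroup H] [InnerProductSpace ℂ H] [CompleteSpace H]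
    [NormedAddCommGroup K] [InnerProductSpace ℂ K] [CompleteSpace K]
    (N : K →L[ℂ] H)                          -- `N = N(A)`
    (P : W →L[ℂ] (H →L[ℂ] H))                -- `B ↦ P_A(B)`
    (Mop : (K →L[ℂ] H) →L[ℂ] W)              -- `y ↦ 𝓕⁻¹ Q (𝒫 T y 𝒫)`
    -- Assumption 1: `𝓕⁻¹ ∘ 𝓕 = id` on `𝒲`
    (hM : ∀ B : W, Mop ((P B).comp N) = B)
    -- the reversion terms
    (F₁ F₂ F₃ : W → W)
    (hF₁ : ∀ B : W, F₁ B = Mop (∑' k : ℕ, (P B ^ (k + 1)).comp N))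
    (hF₂ : ∀ B : W, F₂ B = -Mop ((P (F₁ B) ^ 2).comp N))
    (hF₃ : ∀ B : W, F₃ B =
      -Mop ((P (F₁ B) ^ 3).comp N)
      + Mop (((P (F₁ B)).comp (P (Mop ((P (F₁ B) ^ 2).comp N)))).comp N)
      + Mop (((P (Mop ((P (F₁ B) ^ 2).comp N))).comp (P (F₁ B))).comp N)) :
    ∃ δ C : ℝ, 0 < δ ∧ 0 < C ∧ ∀ B : W, ‖B‖ ≤ δ →
      ‖F₁ B‖ ≤ C * ‖B‖ ∧
      ‖F₂ B‖ ≤ C * ‖B‖ ^ 2 ∧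
      ‖F₃ B‖ ≤ C * ‖B‖ ^ 3 ∧
      ‖B - (F₁ B + F₂ B + F₃ B)‖ ≤ C * ‖B‖ ^ 4 :=
  stmt16_general N P Mop hM F₁ F₂ F₃ hF₁ hF₂ hF₃
end
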